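/- Let c be a circle-count function on states of Fin n and T : (Fin n → Bool) → ℕ a function satisfying: (i) for all adjacent A-maximal states σ ≤ τ, T(τ) ≤ T(σ); and (ii) for every coordinate i such that the state S_A^{(i)}, obtained from the all-A state S_A by changing only coordinate i to false, satisfies c(S_A^{(i)}) = c(S_A) + 1, one has T(S_A^{(i)}) = T(S_A) + 2. Then the coefficient of t^{T(S_A)} in the polynomial ∑_{σ A-maximal} (−1)^{c(σ)−1} · t^{T(σ)} ∈ ℤ[t] equals (−1)^{c(S_A)−1}; in particular this polynomial is nonzero (the contribution of the all-A state cannot be cancelled by the contributions of other states). -/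

import Mathlib

open LaurentPolynomial Polynomial Finset

/-- `aC σ` is the number of A-smoothings of the state `σ`, i.e. the number of
coordinates where `σ` takes the value `true`. -/
def aC {n : ℕ} (σ : Fin n → Bool) : ℕ := (Finset.univ.filter fun i => σ i = true).card

/-- `bC σ = n - aC σ` is the number of B-smoothings of the state `σ`. -/
def bC {n : ℕ} (σ : Fin n → Bool) : ℕ := n - aC σ

/-- Two states are adjacent if they differ in exactly one coordinate. -/
def Adjacent {n : ℕ} (σ τ : Fin n → Bool) : Prop :=
  (Finset.univ.filter fun i => σ i ≠ τ i).card = 1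

/-- `StateLE σ τ` iff `τ i = true` whenever `σ i = true`. -/
def StateLE {n : ℕ} (σ τ : Fin n → Bool) : Prop := ∀ i, σ i = true → τ i = true

/-- A circle-count function: `c σ ≥ 1` for all states and `|c σ - c τ| = 1`
for adjacent states. -/
def IsCircleCount {n : ℕ} (c : (Fin n → Bool) → ℕ) : Prop :=
  (∀ σ, 1 ≤ c σ) ∧ ∀ σ τ, Adjacent σ τ → |(c σ : ℤ) - (c τ : ℤ)| = 1

/-- The all-A state: the constant-`true` state. -/
def SA (n : ℕ) : Fin n → Bool := fun _ => true

/-- The all-B state: the constant-`false` state. -/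
def SB (n : ℕ) : Fin n → Bool := fun _ => false

/-- A state `σ` is A-maximal for `c` if `c σ = c S_A + b σ`. -/
def AMaximal {n : ℕ} (c : (Fin n → Bool) → ℕ) (σ : Fin n → Bool) : Prop :=
  c σ = c (SA n) + bC σ

/-- A state `σ` is B-minimal for `c` if `c σ = c S_B + a σ`. -/
def BMinimal {n : ℕ} (c : (Fin n → Bool) → ℕ) (σ : Fin n → Bool) : Prop :=
  c σ = c (SB n) + aC σ

instance {n : ℕ} (c : (Fin n → Bool) → ℕ) : DecidablePred (AMaximal c) :=
  fun σ => inferInstanceAs (Decidable (c σ = c (SA n) + bC σ))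

instance {n : ℕ} (c : (Fin n → Bool) → ℕ) : DecidablePred (BMinimal c) :=
  fun σ => inferInstanceAs (Decidable (c σ = c (SB n) + aC σ))

/-- The contribution `A^{a(σ)-b(σ)} (−A²−A⁻²)^{c(σ)-1} t^{T(σ)}` of the state `σ`
to the Kauffman bracket; a Laurent polynomial in `A` over `ℤ[t]`, where `A` is the
Laurent variable `LaurentPolynomial.T 1` and `t` is `Polynomial.X`. -/
noncomputable def contrib {n : ℕ} (c T : (Fin n → Bool) → ℕ) (σ : Fin n → Bool) :
    LaurentPolynomial (Polynomial ℤ) :=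
  LaurentPolynomial.T ((aC σ : ℤ) - (bC σ : ℤ)) *
    (-(LaurentPolynomial.T 2) - LaurentPolynomial.T (-2)) ^ (c σ - 1) *
    LaurentPolynomial.C (Polynomial.X ^ T σ)

/-- The Kauffman bracket state sum `⟨n, c, T⟩`. -/
noncomputable def bracket (n : ℕ) (c T : (Fin n → Bool) → ℕ) :
    LaurentPolynomial (Polynomial ℤ) :=
  ∑ σ : Fin n → Bool, contrib c T σ

/-- The coefficient of `A^j` in a Laurent polynomial over `ℤ[t]`. -/
noncomputable def coeffA (P : LaurentPolynomial (Polynomial ℤ)) (j : ℤ) : Polynomial ℤ := (AddMonoidAlgebra.coeff P) j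

/-- The largest exponent of `A` with nonzero coefficient (junk value `0` for `P = 0`). -/
noncomputable def maxdeg (P : LaurentPolynomial (Polynomial ℤ)) : ℤ := WithBot.unbotD 0 (AddMonoidAlgebra.coeff P).support.max

/-- The smallest exponent of `A` with nonzero coefficient (junk value `0` for `P = 0`). -/
noncomputable def mindeg (P : LaurentPolynomial (Polynomial ℤ)) : ℤ := WithTop.untopD 0 (AddMonoidAlgebra.coeff P).support.min

/-- `spanDeg P = maxdeg P - mindeg P`. -/
noncomputable def spanDeg (P : LaurentPolynomial (Polynomial ℤ)) : ℤ := maxdeg P - mindeg P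

lemma aC_le_n {n : ℕ} (σ : Fin n → Bool) : aC σ ≤ n := by
  unfold aC
  calc (Finset.univ.filter fun i => σ i = true).card ≤ Finset.univ.card :=
        Finset.card_filter_le _ _
    _ = n := by simp

lemma exists_false_of_ne_SA {n : ℕ} (σ : Fin n → Bool) (h : σ ≠ SA n) :
    ∃ i, σ i = false := by
  by_contra hcon
  push_neg at hcon
  exact h (funext fun i => by
    have := hcon i
    cases hσ : σ i with
    | false => exact absurd hσ this
    | true => rfl)

lemma aC_SA (n : ℕ) : aC (SA n) = n := by
  unfold aC SA; simp

lemma bC_SA (n : ℕ) : bC (SA n) = 0 := by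
  unfold bC; rw [aC_SA]; omega

lemma eq_SA_of_bC_eq_zero {n : ℕ} (σ : Fin n → Bool) (h : bC σ = 0) : σ = SA n := by
  by_contra hne
  obtain ⟨i, hi⟩ := exists_false_of_ne_SA σ hne
  unfold bC aC at h
  have hlt : (Finset.univ.filter fun j => σ j = true).card < n := by
    have hsub : (Finset.univ.filter fun j => σ j = true) ⊆ Finset.univ.erase i := by
      intro j hj
      simp only [Finset.mem_filter] at hj
      refine Finset.mem_erase.2 ⟨?_, Finset.mem_univ j⟩
      rintro rfl; rw [hi] at hj; exact Bool.false_ne_true hj.2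
    calc (Finset.univ.filter fun j => σ j = true).card
        ≤ (Finset.univ.erase i).card := Finset.card_le_card hsub
      _ < Finset.univ.card := Finset.card_erase_lt_of_mem (Finset.mem_univ i)
      _ = n := by simp
  omega

lemma aC_update_true {n : ℕ} (σ : Fin n → Bool) (i : Fin n) (h : σ i = false) :
    aC (Function.update σ i true) = aC σ + 1 := by
  unfold aC
  have hset : (Finset.univ.filter fun j => Function.update σ i true j = true) =
      insert i (Finset.univ.filter fun j => σ j = true) := by
    ext j
    by_cases hj : j = i <;> simp [Function.update_apply, hj, h]
  rw [hset, Finset.card_insert_of_notMem (by simp [h])]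

lemma bC_update_true {n : ℕ} (σ : Fin n → Bool) (i : Fin n) (h : σ i = false) :
    bC (Function.update σ i true) = bC σ - 1 ∧ 1 ≤ bC σ := by
  have h1 := aC_update_true σ i h
  have h2 := aC_le_n (Function.update σ i true)
  unfold bC
  omega

lemma adjacent_update {n : ℕ} (σ : Fin n → Bool) (i : Fin n) (h : σ i = false) :
    Adjacent σ (Function.update σ i true) := by
  unfold Adjacent
  have hset : (Finset.univ.filter fun j => σ j ≠ Function.update σ i true j) = {i} := by
    ext j
    by_cases hj : j = i <;> simp [Function.update_apply, hj, h]
  rw [hset, Finset.card_singleton]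

lemma stateLE_update {n : ℕ} (σ : Fin n → Bool) (i : Fin n) :
    StateLE σ (Function.update σ i true) := by
  intro j hj
  by_cases hji : j = i <;> simp [Function.update_apply, hji, hj]

lemma c_le_aux {n : ℕ} (c : (Fin n → Bool) → ℕ) (hc : IsCircleCount c) :
    ∀ k (σ : Fin n → Bool), bC σ = k → c σ ≤ c (SA n) + bC σ := by
  intro k
  induction k with
  | zero => intro σ hσ; rw [eq_SA_of_bC_eq_zero σ hσ]; omega
  | succ k ih =>
    intro σ hσ
    have hne : σ ≠ SA n := by
      intro h; rw [h, bC_SA] at hσ; omega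
    obtain ⟨i, hi⟩ := exists_false_of_ne_SA σ hne
    obtain ⟨hb, _⟩ := bC_update_true σ i hi
    have hadj := adjacent_update σ i hi
    have habs := hc.2 σ _ hadj
    rw [abs_eq (by norm_num : (0:ℤ) ≤ 1)] at habs
    have := ih (Function.update σ i true) (by omega)
    omega

lemma c_le {n : ℕ} (c : (Fin n → Bool) → ℕ) (hc : IsCircleCount c)
    (σ : Fin n → Bool) : c σ ≤ c (SA n) + bC σ :=
  c_le_aux c hc _ σ rfl

lemma amax_update {n : ℕ} (c : (Fin n → Bool) → ℕ) (hc : IsCircleCount c)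
    (σ : Fin n → Bool) (i : Fin n) (hi : σ i = false) (hσ : AMaximal c σ) :
    AMaximal c (Function.update σ i true) := by
  obtain ⟨hb, hb1⟩ := bC_update_true σ i hi
  have habs := hc.2 σ _ (adjacent_update σ i hi)
  rw [abs_eq (by norm_num : (0:ℤ) ≤ 1)] at habs
  have hle := c_le c hc (Function.update σ i true)
  unfold AMaximal at *
  omega

lemma T_ge_aux {n : ℕ} (c : (Fin n → Bool) → ℕ) (hc : IsCircleCount c)
    (T : (Fin n → Bool) → ℕ)
    (h1 : ∀ σ τ : Fin n → Bool, Adjacent σ τ → AMaximal c σ → AMaximal c τ →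
      StateLE σ τ → T τ ≤ T σ)
    (h2 : ∀ i : Fin n, c (Function.update (SA n) i false) = c (SA n) + 1 →
      T (Function.update (SA n) i false) = T (SA n) + 2) :
    ∀ k (σ : Fin n → Bool), bC σ = k → AMaximal c σ → σ ≠ SA n →
      T (SA n) + 2 ≤ T σ := by
  intro k
  induction k with
  | zero => intro σ hσ _ hne; exact absurd (eq_SA_of_bC_eq_zero σ hσ) hne
  | succ k ih =>
    intro σ hσ hmax hne
    obtain ⟨i, hi⟩ := exists_false_of_ne_SA σ hne
    obtain ⟨hb, hb1⟩ := bC_update_true σ i hi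
    have hτmax := amax_update c hc σ i hi hmax
    have hTστ : T (Function.update σ i true) ≤ T σ :=
      h1 σ _ (adjacent_update σ i hi) hmax hτmax (stateLE_update σ i)
    by_cases hτSA : Function.update σ i true = SA n
    · have hσeq : σ = Function.update (SA n) i false := by
        funext j
        by_cases hj : j = i
        · simp [Function.update_apply, hj, hi]
        · have : Function.update σ i true j = true := by rw [hτSA]; rfl
          simp only [Function.update_apply, if_neg hj] at this
          simp [Function.update_apply, SA, hj, this]
      have hb0 : bC (Function.update σ i true) = 0 := by rw [hτSA, bC_SA]
      have hcσ : c σ = c (SA n) + 1 := by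
        have h := hmax; unfold AMaximal at h; omega
      have hT2 := h2 i (by rw [← hσeq]; exact hcσ)
      rw [hσeq]; omega
    · have := ih (Function.update σ i true) (by omega) hτmax hτSA
      omega

lemma SA_amax {n : ℕ} (c : (Fin n → Bool) → ℕ) : AMaximal c (SA n) := by
  unfold AMaximal; rw [bC_SA]; omega

/-- The coefficient of `t^{T S_A}` in the sum of `(−1)^{c σ − 1} t^{T σ}` over
A-maximal states `σ` equals `(−1)^{c S_A − 1}`; in particular this polynomial is
nonzero. -/
theorem stmt12 {n : ℕ} (c : (Fin n → Bool) → ℕ) (hc : IsCircleCount c)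
    (T : (Fin n → Bool) → ℕ)
    (h1 : ∀ σ τ : Fin n → Bool, Adjacent σ τ → AMaximal c σ → AMaximal c τ →
      StateLE σ τ → T τ ≤ T σ)
    (h2 : ∀ i : Fin n, c (Function.update (SA n) i false) = c (SA n) + 1 →
      T (Function.update (SA n) i false) = T (SA n) + 2) :
    Polynomial.coeff
      (∑ σ ∈ Finset.univ.filter (fun σ => AMaximal c σ),
        (-1 : Polynomial ℤ) ^ (c σ - 1) * Polynomial.X ^ T σ) (T (SA n)) =
      (-1 : ℤ) ^ (c (SA n) - 1) ∧
    (∑ σ ∈ Finset.univ.filter (fun σ => AMaximal c σ),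
        (-1 : Polynomial ℤ) ^ (c σ - 1) * Polynomial.X ^ T σ) ≠ 0 := by
  have key : ∀ σ : Fin n → Bool, AMaximal c σ → σ ≠ SA n → T σ ≠ T (SA n) := by
    intro σ hm hne heq
    have := T_ge_aux c hc T h1 h2 _ σ rfl hm hne
    omega
  have hcoeff : Polynomial.coeff
      (∑ σ ∈ Finset.univ.filter (fun σ => AMaximal c σ),
        (-1 : Polynomial ℤ) ^ (c σ - 1) * Polynomial.X ^ T σ) (T (SA n)) =
      (-1 : ℤ) ^ (c (SA n) - 1) := by
    rw [Polynomial.finset_sum_coeff, Finset.sum_eq_single (SA n)]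
    · rw [show ((-1 : Polynomial ℤ)) = Polynomial.C (-1) by simp, ← Polynomial.C_pow,
        Polynomial.coeff_C_mul, Polynomial.coeff_X_pow, if_pos rfl, mul_one]
    · intro σ hσ hne
      simp only [Finset.mem_filter] at hσ
      rw [show ((-1 : Polynomial ℤ)) = Polynomial.C (-1) by simp, ← Polynomial.C_pow,
        Polynomial.coeff_C_mul, Polynomial.coeff_X_pow, if_neg (fun h => key σ hσ.2 hne h.symm), mul_zero]
    · intro h
      exact absurd (Finset.mem_filter.2 ⟨Finset.mem_univ _, SA_amax c⟩) h
  refine ⟨hcoeff, fun h0 => ?_⟩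
  rw [h0, Polynomial.coeff_zero] at hcoeff
  rcases Nat.even_or_odd (c (SA n) - 1) with h | h
  · rw [h.neg_one_pow] at hcoeff; omega
  · rw [h.neg_one_pow] at hcoeff; omega
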